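/- Suppose the seat graph G consists of k ≥ 1 disjoint edges and n − 2k isolated vertices, where n = |P|. For a set M of k pairwise disjoint unordered pairs of agents, let m(M) = min_{{p,q} ∈ M} min(f_p(q), f_q(p)). If 2k = n, then max_π min_{p ∈ P} U_p(π) = max_M m(M); if 2k < n, then max_π min_{p ∈ P} U_p(π) = min(0, max_M m(M)). -/
import Mathlib


open scoped Classical

noncomputable section

namespace SeatArrangement

variable {P V : Type*}

/-- The utility of agent `p` under arrangement `π`:
the sum, over the seat-graph neighbors `v` of `π p`, of `p`'s preference for the agent seated
at `v`. -/
def utility [Fintype V] (G : SimpleGraph V) (f : P → P → ℝ) (π : P ≃ V) (p : P) : ℝ :=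
  ∑ v : V, if G.Adj (π p) v then f p (π.symm v) else 0

/-- The social welfare of an arrangement: the sum of the utilities of all agents. -/
def sw [Fintype P] [Fintype V] (G : SimpleGraph V) (f : P → P → ℝ) (π : P ≃ V) : ℝ :=
  ∑ p : P, utility G f π p

/-- The `(p,q)`-swap arrangement of `π`. -/
def swapArr (π : P ≃ V) (p q : P) : P ≃ V := (Equiv.swap p q).trans π

/-- `{p, q}` is a blocking pair for `π`: both agents strictly improve by swapping seats. -/
def blocking [Fintype V] (G : SimpleGraph V) (f : P → P → ℝ) (π : P ≃ V) (p q : P) : Prop :=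
  p ≠ q ∧ utility G f π p < utility G f (swapArr π p q) p
        ∧ utility G f π q < utility G f (swapArr π p q) q

/-- An arrangement is stable if it has no blocking pair. -/
def stable [Fintype V] (G : SimpleGraph V) (f : P → P → ℝ) (π : P ≃ V) : Prop :=
  ∀ p q : P, ¬ blocking G f π p q

/-- An arrangement is envy-free if no agent would strictly improve by taking
another agent's seat (via a swap). -/
def envyFree [Fintype V] (G : SimpleGraph V) (f : P → P → ℝ) (π : P ≃ V) : Prop :=
  ∀ p q : P, p ≠ q → utility G f (swapArr π p q) p ≤ utility G f π p

/-- The least utility of an agent under `π` (for a finite nonempty set of agents, the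
infimum of the range of utilities is the minimum utility). -/
def minUtil [Fintype V] (G : SimpleGraph V) (f : P → P → ℝ) (π : P ≃ V) : ℝ :=
  sInf (Set.range (utility G f π))

/-- A maximin arrangement maximizes the least utility of an agent. -/
def maximin [Fintype V] (G : SimpleGraph V) (f : P → P → ℝ) (πf : P ≃ V) : Prop :=
  ∀ π : P ≃ V, minUtil G f π ≤ minUtil G f πf

/-- A maximum arrangement maximizes the social welfare. -/
def maximum [Fintype P] [Fintype V] (G : SimpleGraph V) (f : P → P → ℝ) (πm : P ≃ V) : Prop :=
  ∀ π : P ≃ V, sw G f π ≤ sw G f πm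

end SeatArrangement

open SeatArrangement

section Aux

variable {P V : Type*} [Fintype P] [Nonempty P] [Fintype V]
variable (G : SimpleGraph V) (f : P → P → ℝ)

private lemma util_zero (π : P ≃ V) (p : P) (h : G.degree (π p) = 0) :
    utility G f π p = 0 := by
  apply Finset.sum_eq_zero
  intro v _
  rw [if_neg]
  intro hadj
  have hv : v ∈ G.neighborFinset (π p) := (G.mem_neighborFinset _ _).2 hadj
  have hempty : G.neighborFinset (π p) = ∅ :=
    Finset.card_eq_zero.mp (by rw [G.card_neighborFinset_eq_degree]; exact h)
  rw [hempty] at hv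
  exact absurd hv (Finset.notMem_empty v)

private lemma util_adj (hdeg : ∀ v, G.degree v ≤ 1) (π : P ≃ V) (p : P) (w : V)
    (h : G.Adj (π p) w) : utility G f π p = f p (π.symm w) := by
  have hnf : G.neighborFinset (π p) = {w} := by
    refine Finset.eq_singleton_iff_unique_mem.2
      ⟨(G.mem_neighborFinset _ _).2 h, fun x hx => ?_⟩
    exact Finset.card_le_one.mp
      (by rw [G.card_neighborFinset_eq_degree]; exact hdeg _) x hx w
      ((G.mem_neighborFinset _ _).2 h)
  have h2 : utility G f π p = ∑ v ∈ G.neighborFinset (π p), f p (π.symm v) := by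
    unfold utility
    rw [show (fun v => if G.Adj (π p) v then f p (π.symm v) else 0)
        = (fun v => if v ∈ G.neighborFinset (π p) then f p (π.symm v) else 0) from by
      funext v; simp [SimpleGraph.mem_neighborFinset]]
    rw [Finset.sum_ite_mem, Finset.univ_inter]
  rw [h2, hnf, Finset.sum_singleton]

private lemma edge_disj (hdeg : ∀ v, G.degree v ≤ 1) {e e' : Sym2 V}
    (he : e ∈ G.edgeSet) (he' : e' ∈ G.edgeSet) (hee : e ≠ e') {v : V}
    (hv : v ∈ e) (hv' : v ∈ e') : False := by
  have h1 := Sym2.other_spec hv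
  have h2 := Sym2.other_spec hv'
  have hw : G.Adj v (Sym2.Mem.other hv) := by
    rw [← SimpleGraph.mem_edgeSet, h1]; exact he
  have hw' : G.Adj v (Sym2.Mem.other hv') := by
    rw [← SimpleGraph.mem_edgeSet, h2]; exact he'
  have hne : Sym2.Mem.other hv ≠ Sym2.Mem.other hv' := by
    intro hcontra; apply hee; rw [← h1, ← h2, hcontra]
  have hlt : 1 < G.degree v := by
    rw [← G.card_neighborFinset_eq_degree]
    exact Finset.one_lt_card.2 ⟨_, (G.mem_neighborFinset _ _).2 hw, _,
      (G.mem_neighborFinset _ _).2 hw', hne⟩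
  exact absurd (hdeg v) (by omega)

private lemma minUtil_le (π : P ≃ V) (p : P) : minUtil G f π ≤ utility G f π p :=
  csInf_le (Set.finite_range _).bddBelow ⟨p, rfl⟩

private lemma le_minUtil (π : P ≃ V) {c : ℝ} (h : ∀ p, c ≤ utility G f π p) :
    c ≤ minUtil G f π :=
  le_csInf (Set.range_nonempty _) (by rintro x ⟨p, rfl⟩; exact h p)

/-- The matching of agents induced by an arrangement. -/
private def Mof (π : P ≃ V) : Finset (Sym2 P) := G.edgeFinset.image (Sym2.map π.symm)

private lemma Mof_card (π : P ≃ V) : (Mof G π).card = G.edgeFinset.card :=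
  Finset.card_image_of_injective _ (Sym2.map.injective π.symm.injective)

private lemma Mof_nondiag (π : P ≃ V) : ∀ e ∈ Mof G π, ¬ e.IsDiag := by
  intro e he
  obtain ⟨ε, hε, rfl⟩ := Finset.mem_image.1 he
  induction ε using Sym2.inductionOn with
  | hf u w =>
    have hadj : G.Adj u w := (G.mem_edgeSet).1 (SimpleGraph.mem_edgeFinset.1 hε)
    rw [Sym2.map_pair_eq, Sym2.mk_isDiag_iff]
    intro hq
    exact hadj.ne (π.symm.injective hq)

private lemma Mof_pairwise (hdeg : ∀ v, G.degree v ≤ 1) (π : P ≃ V) :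
    ((Mof G π : Set (Sym2 P))).Pairwise fun e e' => ∀ p : P, p ∈ e → p ∉ e' := by
  intro e he e' he' hne p hp hp'
  rw [Finset.mem_coe, Mof, Finset.mem_image] at he he'
  obtain ⟨ε, hε, rfl⟩ := he
  obtain ⟨ε', hε', rfl⟩ := he'
  obtain ⟨u, hu, rfl⟩ := Sym2.mem_map.1 hp
  obtain ⟨u', hu', hx⟩ := Sym2.mem_map.1 hp'
  have hu'' : u' = u := π.symm.injective hx
  subst hu''
  exact edge_disj G hdeg (SimpleGraph.mem_edgeFinset.1 hε) (SimpleGraph.mem_edgeFinset.1 hε')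
    (fun h => hne (by rw [h])) hu hu'

private lemma minUtil_le_inf (hdeg : ∀ v, G.degree v ≤ 1) (π : P ≃ V)
    (hMne : (Mof G π).Nonempty) :
    minUtil G f π ≤ (Mof G π).inf' hMne (Sym2.lift ⟨fun p q => min (f p q) (f q p),
      fun p q => min_comm _ _⟩) := by
  apply Finset.le_inf'
  intro e he
  obtain ⟨ε, hε, rfl⟩ := Finset.mem_image.1 he
  induction ε using Sym2.inductionOn with
  | hf u w =>
    have hadj : G.Adj u w := (G.mem_edgeSet).1 (SimpleGraph.mem_edgeFinset.1 hε)
    rw [Sym2.map_pair_eq, Sym2.lift_mk]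
    have h1 : utility G f π (π.symm u) = f (π.symm u) (π.symm w) := by
      apply util_adj G f hdeg
      rw [Equiv.apply_symm_apply]; exact hadj
    have h2 : utility G f π (π.symm w) = f (π.symm w) (π.symm u) := by
      apply util_adj G f hdeg
      rw [Equiv.apply_symm_apply]; exact hadj.symm
    exact le_min (h1 ▸ minUtil_le G f π (π.symm u)) (h2 ▸ minUtil_le G f π (π.symm w))

private lemma inf_le_util (hdeg : ∀ v, G.degree v ≤ 1) (π : P ≃ V)
    (hMne : (Mof G π).Nonempty) (p : P) (hp : 0 < G.degree (π p)) :
    (Mof G π).inf' hMne (Sym2.lift ⟨fun p q => min (f p q) (f q p),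
      fun p q => min_comm _ _⟩) ≤ utility G f π p := by
  obtain ⟨w, hw⟩ : ∃ w, w ∈ G.neighborFinset (π p) := by
    apply Finset.card_pos.1
    rw [G.card_neighborFinset_eq_degree]; exact hp
  rw [G.mem_neighborFinset] at hw
  have hu : utility G f π p = f p (π.symm w) := util_adj G f hdeg π p w hw
  have hmem : s(p, π.symm w) ∈ Mof G π := by
    rw [Mof, Finset.mem_image]
    exact ⟨s(π p, w), SimpleGraph.mem_edgeFinset.2 ((G.mem_edgeSet).2 hw),
      by rw [Sym2.map_pair_eq, Equiv.symm_apply_apply]⟩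
  refine le_trans (Finset.inf'_le _ hmem) ?_
  rw [Sym2.lift_mk, hu]
  exact min_le_left _ _

private lemma card_support (hdeg : ∀ v, G.degree v ≤ 1) :
    (Finset.univ.filter fun v => 0 < G.degree v).card = 2 * G.edgeFinset.card := by
  have key : ∑ v : V, G.degree v = (Finset.univ.filter fun v => 0 < G.degree v).card := by
    rw [Finset.card_eq_sum_ones,
      ← Finset.sum_filter_add_sum_filter_not Finset.univ (fun v => 0 < G.degree v)
        (fun v => G.degree v)]
    have h2 : ∑ v ∈ Finset.univ.filter (fun v => ¬ 0 < G.degree v), G.degree v = 0 :=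
      Finset.sum_eq_zero fun v hv => by have := (Finset.mem_filter.1 hv).2; omega
    rw [h2, add_zero]
    exact Finset.sum_congr rfl fun v hv => by
      have h1 := hdeg v; have h3 := (Finset.mem_filter.1 hv).2; omega
  exact key.symm.trans (G.sum_degrees_eq_twice_card_edges)

private lemma minUtil_eq_a (hdeg : ∀ v, G.degree v ≤ 1) (hpos : ∀ v, 0 < G.degree v)
    (π : P ≃ V) (hMne : (Mof G π).Nonempty) :
    minUtil G f π = (Mof G π).inf' hMne (Sym2.lift ⟨fun p q => min (f p q) (f q p),
      fun p q => min_comm _ _⟩) := by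
  refine le_antisymm (minUtil_le_inf G f hdeg π hMne) ?_
  exact le_minUtil G f π fun p => inf_le_util G f hdeg π hMne p (hpos (π p))

private lemma minUtil_eq_b (hdeg : ∀ v, G.degree v ≤ 1) {v₀ : V} (hv₀ : G.degree v₀ = 0)
    (π : P ≃ V) (hMne : (Mof G π).Nonempty) :
    minUtil G f π = min 0 ((Mof G π).inf' hMne (Sym2.lift ⟨fun p q => min (f p q) (f q p),
      fun p q => min_comm _ _⟩)) := by
  refine le_antisymm (le_min ?_ (minUtil_le_inf G f hdeg π hMne)) ?_
  · have h0 : utility G f π (π.symm v₀) = 0 := by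
      apply util_zero; rw [Equiv.apply_symm_apply]; exact hv₀
    exact h0 ▸ minUtil_le G f π (π.symm v₀)
  · apply le_minUtil
    intro p
    by_cases hp : 0 < G.degree (π p)
    · exact le_trans (min_le_right _ _) (inf_le_util G f hdeg π hMne p hp)
    · rw [util_zero G f π p (by omega)]
      exact min_le_left _ _

private lemma inf'_proof_irrel {α : Type*} (L : Sym2 α → ℝ) (s t : Finset (Sym2 α))
    (hs : s.Nonempty) (ht : t.Nonempty) (h : s = t) : s.inf' hs L = t.inf' ht L := by
  subst h; rfl

/-- The key construction: every valid matching of agents is realized by some arrangement. -/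
private lemma exists_arr (hdeg : ∀ v, G.degree v ≤ 1)
    (hcard : Fintype.card P = Fintype.card V)
    (M : Finset (Sym2 P)) (hMcard : M.card = G.edgeFinset.card)
    (hdiag : ∀ e ∈ M, ¬ e.IsDiag)
    (hpair : ((M : Set (Sym2 P))).Pairwise fun e e' => ∀ p : P, p ∈ e → p ∉ e') :
    ∃ π : P ≃ V, Mof G π = M := by
  classical
  haveI hVne : Nonempty V := by
    rw [← Fintype.card_pos_iff, ← hcard]
    exact Fintype.card_pos
  set A : Finset P := Finset.univ.filter (fun p => ∃ e ∈ M, p ∈ e) with hA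
  set B : Finset V := Finset.univ.filter (fun v => 0 < G.degree v) with hB
  have memA : ∀ {p : P}, p ∈ A ↔ ∃ e ∈ M, p ∈ e := by
    intro p; simp [hA]
  have memB : ∀ {v : V}, v ∈ B ↔ 0 < G.degree v := by
    intro v; simp [hB]
  have hout : ∀ e : Sym2 P, s((Quot.out e).1, (Quot.out e).2) = e := fun e => Quot.out_eq e
  have houtV : ∀ ε : Sym2 V, s((Quot.out ε).1, (Quot.out ε).2) = ε := fun ε => Quot.out_eq ε
  have hmemB : ∀ ε ∈ G.edgeFinset, ∀ v, v ∈ ε → v ∈ B := by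
    intro ε hε v hv
    have h1 := Sym2.other_spec hv
    have hadj : G.Adj v (Sym2.Mem.other hv) := by
      rw [← SimpleGraph.mem_edgeSet, h1]; exact SimpleGraph.mem_edgeFinset.1 hε
    rw [memB, ← G.card_neighborFinset_eq_degree]
    exact Finset.card_pos.2 ⟨_, (G.mem_neighborFinset _ _).2 hadj⟩
  have hEuniq : ∀ {p : P} {e e' : Sym2 P}, e ∈ M → e' ∈ M → p ∈ e → p ∈ e' → e = e' := by
    intro p e e' he he' hpe hpe'
    by_contra hee
    exact hpair (Finset.mem_coe.2 he) (Finset.mem_coe.2 he') hee p hpe hpe'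
  set E : P → Sym2 P := fun p => if h : ∃ e ∈ M, p ∈ e then h.choose else s(p, p) with hEdef
  have hE1 : ∀ p ∈ A, E p ∈ M ∧ p ∈ E p := by
    intro p hp
    rw [memA] at hp
    simp only [hEdef, dif_pos hp]
    exact hp.choose_spec
  have hE2 : ∀ {p : P} {e : Sym2 P}, e ∈ M → p ∈ e → E p = e := by
    intro p e he hpe
    have hp : p ∈ A := memA.2 ⟨e, he, hpe⟩
    exact hEuniq (hE1 p hp).1 he (hE1 p hp).2 hpe
  set φ : {e // e ∈ M} ≃ {ε // ε ∈ G.edgeFinset} := Finset.equivOfCardEq hMcard with hφ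
  set φ' : Sym2 P → Sym2 V := fun e =>
    if h : e ∈ M then (φ ⟨e, h⟩ : Sym2 V)
    else s(Classical.arbitrary V, Classical.arbitrary V) with hφ'
  have hφ'mem : ∀ e ∈ M, φ' e ∈ G.edgeFinset := by
    intro e he; simp only [hφ', dif_pos he]; exact (φ ⟨e, he⟩).2
  have hφ'inj : ∀ e ∈ M, ∀ e' ∈ M, φ' e = φ' e' → e = e' := by
    intro e he e' he' h
    simp only [hφ', dif_pos he, dif_pos he'] at h
    have h2 := φ.injective (Subtype.ext h)
    exact congrArg Subtype.val h2
  have hφ'surj : ∀ ε ∈ G.edgeFinset, ∃ e ∈ M, φ' e = ε := by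
    intro ε hε
    refine ⟨(φ.symm ⟨ε, hε⟩).1, (φ.symm ⟨ε, hε⟩).2, ?_⟩
    simp only [hφ', dif_pos (φ.symm ⟨ε, hε⟩).2]
    rw [show (⟨(φ.symm ⟨ε, hε⟩).1, (φ.symm ⟨ε, hε⟩).2⟩ : {e // e ∈ M}) = φ.symm ⟨ε, hε⟩
      from rfl, Equiv.apply_symm_apply]
  have hdisj : ∀ e ∈ M, ∀ e' ∈ M, e ≠ e' →
      Disjoint ({(Quot.out e).1, (Quot.out e).2} : Finset P)
        {(Quot.out e').1, (Quot.out e').2} := by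
    intro e he e' he' hee
    rw [Finset.disjoint_left]
    intro p hp hp'
    have hpe : p ∈ e := by
      rw [← hout e, Sym2.mem_iff]; simpa using hp
    have hpe' : p ∈ e' := by
      rw [← hout e', Sym2.mem_iff]; simpa using hp'
    exact hpair (Finset.mem_coe.2 he) (Finset.mem_coe.2 he') hee p hpe hpe'
  have hAcard : A.card = 2 * M.card := by
    have hAeq : A = M.biUnion (fun e => {(Quot.out e).1, (Quot.out e).2}) := by
      ext p
      rw [memA, Finset.mem_biUnion]
      constructor
      · rintro ⟨e, he, hpe⟩
        refine ⟨e, he, ?_⟩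
        rw [← hout e, Sym2.mem_iff] at hpe
        simp [hpe]
      · rintro ⟨e, he, hpe⟩
        refine ⟨e, he, ?_⟩
        rw [← hout e, Sym2.mem_iff]
        simpa using hpe
    have hc2 : ∀ e ∈ M, ({(Quot.out e).1, (Quot.out e).2} : Finset P).card = 2 := by
      intro e he
      refine Finset.card_pair fun h => ?_
      have hd := hdiag e he
      rw [← hout e, Sym2.mk_isDiag_iff] at hd
      exact hd h
    rw [hAeq, Finset.card_biUnion hdisj, Finset.sum_congr rfl hc2, Finset.sum_const,
      smul_eq_mul, mul_comm]
  have hBcard : B.card = 2 * G.edgeFinset.card := card_support G hdeg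
  have hABcard : A.card = B.card := by rw [hAcard, hBcard, hMcard]
  have hcc : Aᶜ.card = Bᶜ.card := by
    rw [Finset.card_compl, Finset.card_compl, hABcard, hcard]
  set ψ : {p // p ∈ Aᶜ} ≃ {v // v ∈ Bᶜ} := Finset.equivOfCardEq hcc with hψ
  set ψ' : P → V := fun p => if h : p ∈ Aᶜ then (ψ ⟨p, h⟩ : V) else Classical.arbitrary V
    with hψ'
  have hψ'memc : ∀ p ∉ A, ψ' p ∈ Bᶜ := by
    intro p hp
    simp only [hψ', dif_pos (Finset.mem_compl.2 hp)]
    exact (ψ ⟨p, Finset.mem_compl.2 hp⟩).2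
  have hψ'inj : ∀ p ∉ A, ∀ q ∉ A, ψ' p = ψ' q → p = q := by
    intro p hp q hq h
    simp only [hψ', dif_pos (Finset.mem_compl.2 hp), dif_pos (Finset.mem_compl.2 hq)] at h
    have h2 := ψ.injective (Subtype.ext h)
    exact congrArg Subtype.val h2
  set F : P → V := fun p => if h : p ∈ A then
      (if p = (Quot.out (E p)).1 then (Quot.out (φ' (E p))).1 else (Quot.out (φ' (E p))).2)
    else ψ' p with hF
  have hcases : ∀ p ∈ A,
      (p = (Quot.out (E p)).1 ∧ F p = (Quot.out (φ' (E p))).1) ∨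
      (p = (Quot.out (E p)).2 ∧ p ≠ (Quot.out (E p)).1 ∧ F p = (Quot.out (φ' (E p))).2) := by
    intro p hp
    by_cases h1 : p = (Quot.out (E p)).1
    · left; exact ⟨h1, by simp only [hF, dif_pos hp, if_pos h1]⟩
    · right
      have hpe : p ∈ E p := (hE1 p hp).2
      rw [← hout (E p), Sym2.mem_iff] at hpe
      exact ⟨hpe.resolve_left h1, h1, by simp only [hF, dif_pos hp, if_neg h1]⟩
  have hFmem : ∀ p ∈ A, F p ∈ φ' (E p) := by
    intro p hp
    rcases hcases p hp with ⟨_, h⟩ | ⟨_, _, h⟩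
    · rw [h]; exact Sym2.out_fst_mem _
    · rw [h]; exact Sym2.out_snd_mem _
  have hFB : ∀ p ∈ A, F p ∈ B := fun p hp =>
    hmemB _ (hφ'mem _ (hE1 p hp).1) _ (hFmem p hp)
  have hFnotB : ∀ p ∉ A, F p ∈ Bᶜ := by
    intro p hp
    have : F p = ψ' p := by simp only [hF, dif_neg hp]
    rw [this]
    exact hψ'memc p hp
  have hkey : ∀ e ∈ M, F (Quot.out e).1 = (Quot.out (φ' e)).1 ∧
      F (Quot.out e).2 = (Quot.out (φ' e)).2 := by
    intro e he
    have hane : (Quot.out e).1 ≠ (Quot.out e).2 := by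
      intro h
      have hd := hdiag e he
      rw [← hout e, Sym2.mk_isDiag_iff] at hd
      exact hd h
    have ha : (Quot.out e).1 ∈ e := Sym2.out_fst_mem e
    have hb : (Quot.out e).2 ∈ e := Sym2.out_snd_mem e
    have hEa : E (Quot.out e).1 = e := hE2 he ha
    have hEb : E (Quot.out e).2 = e := hE2 he hb
    have hamem : (Quot.out e).1 ∈ A := memA.2 ⟨e, he, ha⟩
    have hbmem : (Quot.out e).2 ∈ A := memA.2 ⟨e, he, hb⟩
    constructor
    · simp only [hF, dif_pos hamem, hEa]
      rw [if_pos trivial]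
    · simp only [hF, dif_pos hbmem, hEb]
      rw [if_neg fun h => hane h.symm]
  have hFinj : Function.Injective F := by
    intro p q hpq
    by_cases hp : p ∈ A <;> by_cases hq : q ∈ A
    · by_cases hE : E p = E q
      · have huw : (Quot.out (φ' (E p))).1 ≠ (Quot.out (φ' (E p))).2 := by
          have hεm : φ' (E p) ∈ G.edgeFinset := hφ'mem _ (hE1 p hp).1
          have hadj : G.Adj (Quot.out (φ' (E p))).1 (Quot.out (φ' (E p))).2 := by
            rw [← SimpleGraph.mem_edgeSet, houtV]
            exact SimpleGraph.mem_edgeFinset.1 hεm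
          exact hadj.ne
        rcases hcases p hp with ⟨h1, h2⟩ | ⟨h1, h1', h2⟩ <;>
          rcases hcases q hq with ⟨g1, g2⟩ | ⟨g1, g1', g2⟩
        · rw [h1, g1, hE]
        · exact absurd (by rw [← h2, hpq, g2, hE]) huw
        · exact absurd (by rw [← g2, ← hpq, h2, hE] :
            (Quot.out (φ' (E q))).1 = (Quot.out (φ' (E q))).2) (hE ▸ huw)
        · rw [h1, g1, hE]
      · have hne : φ' (E p) ≠ φ' (E q) :=
          fun h => hE (hφ'inj _ (hE1 p hp).1 _ (hE1 q hq).1 h)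
        exact absurd hpq fun _ => edge_disj G hdeg
          (SimpleGraph.mem_edgeFinset.1 (hφ'mem _ (hE1 p hp).1))
          (SimpleGraph.mem_edgeFinset.1 (hφ'mem _ (hE1 q hq).1)) hne
          (hFmem p hp) (by rw [hpq]; exact hFmem q hq)
    · exact absurd (hpq ▸ hFB p hp) (Finset.mem_compl.1 (hFnotB q hq))
    · exact absurd (hpq ▸ hFB q hq) (Finset.mem_compl.1 (hFnotB p hp))
    · refine hψ'inj p hp q hq ?_
      have e1 : F p = ψ' p := by simp only [hF, dif_neg hp]
      have e2 : F q = ψ' q := by simp only [hF, dif_neg hq]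
      rw [← e1, ← e2, hpq]
  have hbij : Function.Bijective F :=
    (Fintype.bijective_iff_injective_and_card F).2 ⟨hFinj, hcard⟩
  refine ⟨Equiv.ofBijective F hbij, ?_⟩
  refine (Finset.eq_of_subset_of_card_le ?_ ?_).symm
  · intro e he
    rw [Mof, Finset.mem_image]
    refine ⟨φ' e, hφ'mem e he, ?_⟩
    obtain ⟨h1, h2⟩ := hkey e he
    rw [← houtV (φ' e), Sym2.map_pair_eq]
    have ha : (Equiv.ofBijective F hbij).symm (Quot.out (φ' e)).1 = (Quot.out e).1 := by
      rw [Equiv.symm_apply_eq]; exact h1.symm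
    have hb : (Equiv.ofBijective F hbij).symm (Quot.out (φ' e)).2 = (Quot.out e).2 := by
      rw [Equiv.symm_apply_eq]; exact h2.symm
    rw [ha, hb, hout e]
  · rw [Mof_card]
    exact hMcard.ge

end Aux

/-- suppose the seat graph consists of `k ≥ 1` disjoint edges and `n − 2k`
isolated vertices (i.e. every vertex has degree at most 1 and there are exactly `k` edges).
For a set `M` of `k` pairwise disjoint unordered pairs of agents let
`m(M) = min_{{p,q} ∈ M} min (f p q) (f q p)`. If `2k = n` then
`max_π min_p U_p(π) = max_M m(M)`, and if `2k < n` then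
`max_π min_p U_p(π) = min 0 (max_M m(M))`. -/
theorem maximin_eq_maximin_matching {P V : Type*} [Fintype P] [Nonempty P] [Fintype V]
    (G : SimpleGraph V) (f : P → P → ℝ) (k : ℕ) (hk : 1 ≤ k)
    (hdeg : ∀ v : V, G.degree v ≤ 1)
    (hedges : G.edgeSet.ncard = k)
    (hne : Nonempty (P ≃ V)) :
    (2 * k = Fintype.card P →
      ∃ s : ℝ,
        IsGreatest {x : ℝ | ∃ π : P ≃ V, minUtil G f π = x} s ∧
        IsGreatest {x : ℝ | ∃ M : Finset (Sym2 P), ∃ hM : M.Nonempty,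
          M.card = k ∧ (∀ e ∈ M, ¬ e.IsDiag) ∧
          ((M : Set (Sym2 P)).Pairwise fun e e' => ∀ p : P, p ∈ e → p ∉ e') ∧
          M.inf' hM (Sym2.lift ⟨fun p q => min (f p q) (f q p),
            fun p q => min_comm _ _⟩) = x} s) ∧
    (2 * k < Fintype.card P →
      ∃ s : ℝ,
        IsGreatest {x : ℝ | ∃ M : Finset (Sym2 P), ∃ hM : M.Nonempty,
          M.card = k ∧ (∀ e ∈ M, ¬ e.IsDiag) ∧
          ((M : Set (Sym2 P)).Pairwise fun e e' => ∀ p : P, p ∈ e → p ∉ e') ∧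
          M.inf' hM (Sym2.lift ⟨fun p q => min (f p q) (f q p),
            fun p q => min_comm _ _⟩) = x} s ∧
        IsGreatest {x : ℝ | ∃ π : P ≃ V, minUtil G f π = x} (min 0 s)) := by
  classical
  obtain ⟨π₀⟩ := hne
  have hcardPV : Fintype.card P = Fintype.card V := Fintype.card_congr π₀
  have hkE : G.edgeFinset.card = k := by
    rw [← Set.ncard_coe_finset, SimpleGraph.coe_edgeFinset]; exact hedges
  have hMofval : ∀ π : P ≃ V, (Mof G π).Nonempty ∧ (Mof G π).card = k := fun π =>
    ⟨Finset.card_pos.1 (by rw [Mof_card, hkE]; omega), by rw [Mof_card, hkE]⟩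
  set L : Sym2 P → ℝ := Sym2.lift ⟨fun p q => min (f p q) (f q p),
    fun p q => min_comm _ _⟩ with hL
  set X : Set ℝ := {x : ℝ | ∃ M : Finset (Sym2 P), ∃ hM : M.Nonempty,
    M.card = k ∧ (∀ e ∈ M, ¬ e.IsDiag) ∧
    ((M : Set (Sym2 P)).Pairwise fun e e' => ∀ p : P, p ∈ e → p ∉ e') ∧
    M.inf' hM L = x} with hX
  have hXfin : X.Finite := by
    apply Set.Finite.subset (Set.finite_range
      (fun M : Finset (Sym2 P) => if h : M.Nonempty then M.inf' h L else 0))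
    rintro x ⟨M, hM, hMc, hMd, hMp, hMi⟩
    exact ⟨M, by simp only [dif_pos hM]; exact hMi⟩
  have hXne : X.Nonempty :=
    ⟨(Mof G π₀).inf' (hMofval π₀).1 L, Mof G π₀, (hMofval π₀).1, (hMofval π₀).2,
      Mof_nondiag G π₀, Mof_pairwise G hdeg π₀, rfl⟩
  set s := sSup X with hs
  have hsX : s ∈ X := hXne.csSup_mem hXfin
  have hub : ∀ x ∈ X, x ≤ s := fun x hx => le_csSup hXfin.bddAbove hx
  have hGX : IsGreatest X s := ⟨hsX, hub⟩
  constructor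
  · intro h2k
    have hpos : ∀ v, 0 < G.degree v := by
      have huniv : (Finset.univ.filter fun v => 0 < G.degree v) = Finset.univ := by
        apply Finset.eq_univ_of_card
        rw [card_support G hdeg, hkE]
        omega
      intro v
      have hv : v ∈ Finset.univ.filter (fun v => 0 < G.degree v) :=
        huniv.symm ▸ Finset.mem_univ v
      exact (Finset.mem_filter.1 hv).2
    refine ⟨s, ⟨?_, ?_⟩, hGX⟩
    · obtain ⟨M, hM, hMc, hMd, hMp, hMi⟩ := hsX
      obtain ⟨π, hπ⟩ := exists_arr G hdeg hcardPV M (by rw [hMc, hkE]) hMd hMp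
      refine ⟨π, ?_⟩
      rw [minUtil_eq_a G f hdeg hpos π (hMofval π).1, ← hMi]
      exact inf'_proof_irrel L _ _ _ _ hπ
    · rintro x ⟨π, rfl⟩
      rw [minUtil_eq_a G f hdeg hpos π (hMofval π).1]
      exact hub _ ⟨Mof G π, (hMofval π).1, (hMofval π).2, Mof_nondiag G π,
        Mof_pairwise G hdeg π, rfl⟩
  · intro h2k
    have hiso : ∃ v, G.degree v = 0 := by
      by_contra hcon
      push_neg at hcon
      have huniv : (Finset.univ.filter fun v => 0 < G.degree v) = Finset.univ :=
        Finset.eq_univ_iff_forall.2 fun v =>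
          Finset.mem_filter.2 ⟨Finset.mem_univ v, Nat.pos_of_ne_zero (hcon v)⟩
      have hcard2 := card_support G hdeg
      rw [huniv, Finset.card_univ, hkE] at hcard2
      rw [hcardPV] at h2k
      omega
    obtain ⟨v₀, hv₀⟩ := hiso
    refine ⟨s, hGX, ?_, ?_⟩
    · obtain ⟨M, hM, hMc, hMd, hMp, hMi⟩ := hsX
      obtain ⟨π, hπ⟩ := exists_arr G hdeg hcardPV M (by rw [hMc, hkE]) hMd hMp
      refine ⟨π, ?_⟩
      rw [minUtil_eq_b G f hdeg hv₀ π (hMofval π).1, ← hMi]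
      congr 1
      exact inf'_proof_irrel L _ _ _ _ hπ
    · rintro x ⟨π, rfl⟩
      rw [minUtil_eq_b G f hdeg hv₀ π (hMofval π).1]
      exact min_le_min (le_refl 0) (hub _ ⟨Mof G π, (hMofval π).1, (hMofval π).2,
        Mof_nondiag G π, Mof_pairwise G hdeg π, rfl⟩)
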